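/- arXiv:1801.07619 — 2 statements merged into one kernel-verified Lean document; each statement's English description precedes it below -/
import Mathlib

section
/- Let A ∈ M_n(ℂ) be a positive definite matrix, let X ∈ M_n(ℂ) be arbitrary, and let f and g be continuous positive functions on (0,∞) such that h(t) = f(t)/g(t) is a Kwong function on (0,∞). Set k = max{ f(λ)g(λ)/λ : λ ∈ σ(A) }, where σ(A) denotes the spectrum of A. Then ω( f(A) X g(A) + g(A) X f(A) ) ≤ k · ω( A X + X A ). -/
open scoped ComplexOrder

/-- The numerical radius of a complex matrix. -/
noncomputable def numRadius {ι : Type*} [Fintype ι] (A : Matrix ι ι ℂ) : ℝ :=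
  sSup {r : ℝ | ∃ x : EuclideanSpace ℂ ι, ‖x‖ = 1 ∧
    r = ‖dotProduct (star (x : ι → ℂ)) (A.mulVec x)‖}

/-- `f` is a Kwong function on `(0, ∞)`: for all `m` and all distinct positive
`λ₁, …, λ_m`, the matrix `((f λᵢ + f λⱼ)/(λᵢ + λⱼ))ᵢⱼ` is positive semidefinite. -/
def IsKwong (f : ℝ → ℝ) : Prop :=
  ∀ (m : ℕ) (lam : Fin m → ℝ), (∀ i, 0 < lam i) → Function.Injective lam →
    (Matrix.of fun i j : Fin m => (f (lam i) + f (lam j)) / (lam i + lam j)).PosSemidef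

/-- `f` is operator monotone on the interval `J` (in the Loewner order). -/
def IsOperatorMonotoneOn (f : ℝ → ℝ) (J : Set ℝ) : Prop :=
  ∀ (m : ℕ) (A B : Matrix (Fin m) (Fin m) ℂ), A.IsHermitian → B.IsHermitian →
    spectrum ℝ A ⊆ J → spectrum ℝ B ⊆ J → (B - A).PosSemidef →
    (cfc f B - cfc f A).PosSemidef

open Matrix

section Aux

set_option linter.unusedSectionVars false

variable {ι : Type*} [Fintype ι] [DecidableEq ι]

lemma numRadius_nonneg (M : Matrix ι ι ℂ) : 0 ≤ numRadius M := by
  apply Real.sSup_nonneg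
  rintro r ⟨x, hx, rfl⟩
  positivity

lemma norm_apply_le_one {x : EuclideanSpace ℂ ι} (hx : ‖x‖ = 1) (i : ι) : ‖x i‖ ≤ 1 := by
  have h := EuclideanSpace.norm_eq x
  rw [hx] at h
  have h2 : ∑ j, ‖x j‖ ^ 2 = 1 := Real.sqrt_eq_one.mp h.symm
  nlinarith [Finset.single_le_sum (f := fun j => ‖x j‖ ^ 2) (fun j _ => by positivity)
    (Finset.mem_univ i), norm_nonneg (x i)]

lemma numRadius_bddAbove (M : Matrix ι ι ℂ) :
    BddAbove {r : ℝ | ∃ x : EuclideanSpace ℂ ι, ‖x‖ = 1 ∧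
      r = ‖dotProduct (star (x : ι → ℂ)) (M.mulVec x)‖} := by
  refine ⟨∑ i, ∑ j, ‖M i j‖, ?_⟩
  rintro r ⟨x, hx, rfl⟩
  calc ‖dotProduct (star (x : ι → ℂ)) (M.mulVec x)‖
      = ‖∑ i, ∑ j, (starRingEnd ℂ) (x i) * (M i j * x j)‖ := by
        simp [dotProduct, Matrix.mulVec, Finset.mul_sum, Pi.star_apply]
    _ ≤ ∑ i, ∑ j, ‖(starRingEnd ℂ) (x i) * (M i j * x j)‖ := by
        refine (norm_sum_le _ _).trans ?_
        exact Finset.sum_le_sum fun i _ => norm_sum_le _ _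
    _ ≤ ∑ i, ∑ j, ‖M i j‖ := by
        refine Finset.sum_le_sum fun i _ => Finset.sum_le_sum fun j _ => ?_
        rw [norm_mul, norm_mul]
        calc ‖(starRingEnd ℂ) (x i)‖ * (‖M i j‖ * ‖x j‖)
            ≤ 1 * (‖M i j‖ * 1) := by
              apply mul_le_mul
              · simpa using norm_apply_le_one hx i
              · apply mul_le_mul_of_nonneg_left _ (by positivity)
                simpa using norm_apply_le_one hx j
              · positivity
              · norm_num
          _ = ‖M i j‖ := by ring

lemma abs_dotProduct_le (M : Matrix ι ι ℂ) (y : EuclideanSpace ℂ ι) :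
    ‖dotProduct (star (y : ι → ℂ)) (M.mulVec y)‖ ≤ numRadius M * ‖y‖ ^ 2 := by
  by_cases hy : y = 0
  · subst hy
    simp [dotProduct]
  · have hc : (0:ℝ) < ‖y‖ := norm_pos_iff.mpr hy
    set c : ℝ := ‖y‖ with hcdef
    set x : EuclideanSpace ℂ ι := c⁻¹ • y with hxdef
    have hx : ‖x‖ = 1 := by
      have h0 : ‖x‖ = c⁻¹ * c := by
        rw [hxdef, norm_smul, Real.norm_eq_abs, abs_of_pos (inv_pos.mpr hc), ← hcdef]
      rw [h0]
      field_simp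
    have hval : ‖dotProduct (star (x : ι → ℂ)) (M.mulVec x)‖
        = (c⁻¹)^2 * ‖dotProduct (star (y : ι → ℂ)) (M.mulVec y)‖ := by
      have hcoe : (x : ι → ℂ) = (c⁻¹ : ℝ) • (y : ι → ℂ) := rfl
      rw [hcoe, Matrix.mulVec_smul, dotProduct_smul, star_smul, star_trivial,
        smul_dotProduct, smul_smul]
      rw [Complex.real_smul, norm_mul, Complex.norm_real, Real.norm_eq_abs, abs_of_pos (by positivity)]
      ring
    have hle : ‖dotProduct (star (x : ι → ℂ)) (M.mulVec x)‖ ≤ numRadius M :=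
      le_csSup (numRadius_bddAbove M) ⟨x, hx, rfl⟩
    rw [hval] at hle
    have h2 : ‖dotProduct (star (y : ι → ℂ)) (M.mulVec y)‖
        = c^2 * ((c⁻¹)^2 * ‖dotProduct (star (y : ι → ℂ)) (M.mulVec y)‖) := by
      field_simp
    rw [h2]
    calc c^2 * ((c⁻¹)^2 * _) ≤ c^2 * numRadius M := by
          apply mul_le_mul_of_nonneg_left hle (by positivity)
      _ = numRadius M * c ^ 2 := by ring

lemma norm_mulVec_unitary (V : Matrix ι ι ℂ) (h : star V * V = 1) (x y : EuclideanSpace ℂ ι)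
    (hy : (y : ι → ℂ) = V.mulVec x) : ‖y‖ = ‖x‖ := by
  have key : dotProduct (star (y : ι → ℂ)) (y : ι → ℂ)
      = dotProduct (star (x : ι → ℂ)) x := by
    rw [hy, Matrix.star_mulVec, dotProduct_mulVec, Matrix.vecMul_vecMul,
      ← Matrix.star_eq_conjTranspose, h, Matrix.vecMul_one]
  have h1 : (inner ℂ y y : ℂ) = inner ℂ x x := by
    rw [EuclideanSpace.inner_eq_star_dotProduct, EuclideanSpace.inner_eq_star_dotProduct,
      dotProduct_comm, dotProduct_comm x.ofLp]
    exact key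
  have h2 : ‖y‖ ^ 2 = ‖x‖ ^ 2 := by
    rw [← inner_self_eq_norm_sq (𝕜 := ℂ), ← inner_self_eq_norm_sq (𝕜 := ℂ), h1]
  nlinarith [norm_nonneg y, norm_nonneg x]

lemma dotProduct_conj_unitary (V M : Matrix ι ι ℂ) (x : ι → ℂ) :
    dotProduct (star x) ((star V * M * V).mulVec x)
      = dotProduct (star (V.mulVec x)) (M.mulVec (V.mulVec x)) := by
  rw [← Matrix.mulVec_mulVec, ← Matrix.mulVec_mulVec, dotProduct_mulVec,
    Matrix.star_mulVec, Matrix.star_eq_conjTranspose]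

lemma numRadius_unitary_conj (M V : Matrix ι ι ℂ) (h1 : star V * V = 1) (h2 : V * star V = 1) :
    numRadius (star V * M * V) = numRadius M := by
  unfold numRadius
  congr 1
  ext r
  constructor
  · rintro ⟨x, hx, rfl⟩
    refine ⟨WithLp.toLp 2 (V.mulVec x), by rw [norm_mulVec_unitary V h1 x _ rfl, hx], ?_⟩
    rw [dotProduct_conj_unitary]
  · rintro ⟨x, hx, rfl⟩
    refine ⟨WithLp.toLp 2 ((star V).mulVec x), ?_, ?_⟩
    · rw [norm_mulVec_unitary (star V) (by simpa using h2) x _ rfl, hx]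
    · rw [dotProduct_conj_unitary, Matrix.mulVec_mulVec, h2, Matrix.one_mulVec]

lemma dotProduct_expand (M : Matrix ι ι ℂ) (x : ι → ℂ) :
    dotProduct (star x) (M.mulVec x)
      = ∑ i, ∑ j, (starRingEnd ℂ) (x i) * M i j * x j := by
  simp [dotProduct, Matrix.mulVec, Finset.mul_sum, mul_assoc]

lemma euclidean_norm_sq (y : EuclideanSpace ℂ ι) : ‖y‖ ^ 2 = ∑ i, ‖y i‖ ^ 2 := by
  rw [EuclideanSpace.norm_eq, Real.sq_sqrt (by positivity)]

open scoped MatrixOrder in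
lemma schur_bound (C T : Matrix ι ι ℂ) (hC : C.PosSemidef) (k : ℝ) (hk0 : 0 ≤ k)
    (hdiag : ∀ i, (C i i).re ≤ k) :
    numRadius (Matrix.of fun i j => C i j * T i j) ≤ k * numRadius T := by
  have hkT : 0 ≤ k * numRadius T := mul_nonneg hk0 (numRadius_nonneg T)
  apply Real.sSup_le _ hkT
  rintro r ⟨x, hx, rfl⟩
  obtain ⟨B, hBsa, -, hBB⟩ := CFC.exists_sqrt_of_isSelfAdjoint_of_quasispectrumRestricts
    (a := C) hC.isHermitian (QuasispectrumRestricts.nnreal_of_nonneg hC.nonneg)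
  have hBherm : B.IsHermitian := Matrix.isHermitian_iff_isSelfAdjoint.mpr hBsa
  have hC' : ∀ i j, C i j = ∑ l, (starRingEnd ℂ) (B l i) * B l j := by
    intro i j
    rw [← hBB, Matrix.mul_apply]
    refine Finset.sum_congr rfl fun l _ => ?_
    congr 1
    have h := Matrix.conjTranspose_apply B l i
    rw [hBherm] at h
    simpa using h
  set y : ι → EuclideanSpace ℂ ι := fun l => WithLp.toLp 2 (fun i => B l i * x i : ι → ℂ) with hydef
  have hxsum : ∑ i, ‖x i‖ ^ 2 = 1 := by
    have h := EuclideanSpace.norm_eq x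
    rw [hx] at h
    exact Real.sqrt_eq_one.mp h.symm
  -- Step 1 : algebraic identity
  have key : dotProduct (star (x : ι → ℂ))
        ((Matrix.of fun i j => C i j * T i j).mulVec x)
      = ∑ l, dotProduct (star (y l : ι → ℂ)) (T.mulVec (y l)) := by
    rw [dotProduct_expand]
    have rhs : ∀ l, dotProduct (star (y l : ι → ℂ)) (T.mulVec (y l))
        = ∑ i, ∑ j, ((starRingEnd ℂ) (B l i) * B l j)
            * ((starRingEnd ℂ) (x i) * T i j * x j) := by
      intro l
      rw [dotProduct_expand]
      refine Finset.sum_congr rfl fun i _ => Finset.sum_congr rfl fun j _ => ?_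
      simp only [hydef, _root_.map_mul]
      ring
    calc ∑ i, ∑ j, (starRingEnd ℂ) (x i) * (Matrix.of fun i j => C i j * T i j) i j * x j
        = ∑ i, ∑ j, ∑ l, ((starRingEnd ℂ) (B l i) * B l j)
            * ((starRingEnd ℂ) (x i) * T i j * x j) := by
          refine Finset.sum_congr rfl fun i _ => Finset.sum_congr rfl fun j _ => ?_
          rw [Matrix.of_apply, hC' i j, Finset.sum_mul, Finset.mul_sum, Finset.sum_mul]
          refine Finset.sum_congr rfl fun l _ => ?_
          ring
      _ = ∑ i, ∑ l, ∑ j, ((starRingEnd ℂ) (B l i) * B l j)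
            * ((starRingEnd ℂ) (x i) * T i j * x j) := by
          exact Finset.sum_congr rfl fun i _ => Finset.sum_comm
      _ = ∑ l, ∑ i, ∑ j, ((starRingEnd ℂ) (B l i) * B l j)
            * ((starRingEnd ℂ) (x i) * T i j * x j) := Finset.sum_comm
      _ = ∑ l, dotProduct (star (y l : ι → ℂ)) (T.mulVec (y l)) := by
          exact Finset.sum_congr rfl fun l _ => (rhs l).symm
  -- Step 2 : norms of the y l
  have hynorm : ∑ l, ‖y l‖ ^ 2 ≤ k := by
    have h1 : ∀ l, ‖y l‖ ^ 2 = ∑ i, ‖B l i‖ ^ 2 * ‖x i‖ ^ 2 := by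
      intro l
      rw [euclidean_norm_sq]
      exact Finset.sum_congr rfl fun i _ => by
        simp [hydef, norm_mul, mul_pow]
    have h2 : ∀ i, (C i i).re = ∑ l, ‖B l i‖ ^ 2 := by
      intro i
      rw [hC' i i]
      rw [Complex.re_sum]
      refine Finset.sum_congr rfl fun l _ => ?_
      rw [mul_comm, Complex.mul_conj, Complex.ofReal_re, Complex.normSq_eq_norm_sq]
    calc ∑ l, ‖y l‖ ^ 2 = ∑ l, ∑ i, ‖B l i‖ ^ 2 * ‖x i‖ ^ 2 := by
          exact Finset.sum_congr rfl fun l _ => h1 l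
      _ = ∑ i, (∑ l, ‖B l i‖ ^ 2) * ‖x i‖ ^ 2 := by
          rw [Finset.sum_comm]
          exact Finset.sum_congr rfl fun i _ => (Finset.sum_mul _ _ _).symm
      _ = ∑ i, (C i i).re * ‖x i‖ ^ 2 := by
          exact Finset.sum_congr rfl fun i _ => by rw [h2]
      _ ≤ ∑ i, k * ‖x i‖ ^ 2 := by
          refine Finset.sum_le_sum fun i _ => ?_
          exact mul_le_mul_of_nonneg_right (hdiag i) (by positivity)
      _ = k := by rw [← Finset.mul_sum, hxsum, mul_one]
  -- Step 3 : conclude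
  calc ‖dotProduct (star (x : ι → ℂ))
          ((Matrix.of fun i j => C i j * T i j).mulVec x)‖
      = ‖∑ l, dotProduct (star (y l : ι → ℂ)) (T.mulVec (y l))‖ := by
        rw [key]
    _ ≤ ∑ l, ‖dotProduct (star (y l : ι → ℂ)) (T.mulVec (y l))‖ :=
        norm_sum_le _ _
    _ ≤ ∑ l, numRadius T * ‖y l‖ ^ 2 :=
        Finset.sum_le_sum fun l _ => abs_dotProduct_le T (y l)
    _ = numRadius T * ∑ l, ‖y l‖ ^ 2 := by rw [← Finset.mul_sum]
    _ ≤ numRadius T * k := mul_le_mul_of_nonneg_left hynorm (numRadius_nonneg T)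
    _ = k * numRadius T := mul_comm _ _

end Aux

open scoped MatrixOrder in
lemma posSemidef_map_ofReal {ι : Type*} [Fintype ι] {P : Matrix ι ι ℝ} (hP : P.PosSemidef) :
    (P.map Complex.ofReal).PosSemidef := by
  obtain ⟨B, hB⟩ : ∃ B : Matrix ι ι ℝ, P = Bᴴ * B := by
    classical
    obtain ⟨B, hBsa, -, hBB⟩ := CFC.exists_sqrt_of_isSelfAdjoint_of_quasispectrumRestricts
      (a := P) hP.isHermitian (QuasispectrumRestricts.nnreal_of_nonneg hP.nonneg)
    exact ⟨B, by rw [← hBB, Matrix.isHermitian_iff_isSelfAdjoint.mpr hBsa]⟩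
  have : P.map Complex.ofReal = (B.map Complex.ofReal)ᴴ * (B.map Complex.ofReal) := by
    rw [← Matrix.conjTranspose_map Complex.ofReal (fun x => by simp), hB]
    exact Matrix.map_mul (f := Complex.ofRealHom)
  rw [this]
  exact Matrix.posSemidef_conjTranspose_mul_self _

theorem stmt_0 {n : ℕ} (A X : Matrix (Fin n) (Fin n) ℂ) (hA : A.PosDef)
    (f g : ℝ → ℝ)
    (hfc : ContinuousOn f (Set.Ioi 0)) (hgc : ContinuousOn g (Set.Ioi 0))
    (hfpos : ∀ t ∈ Set.Ioi (0 : ℝ), 0 < f t) (hgpos : ∀ t ∈ Set.Ioi (0 : ℝ), 0 < g t)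
    (hK : IsKwong fun t => f t / g t) (k : ℝ)
    (hk : IsGreatest ((fun lam => f lam * g lam / lam) '' spectrum ℝ A) k) :
    numRadius (cfc f A * X * cfc g A + cfc g A * X * cfc f A) ≤
      k * numRadius (A * X + X * A) := by
  have hH : A.IsHermitian := hA.1
  set V : Matrix (Fin n) (Fin n) ℂ := (hH.eigenvectorUnitary : Matrix (Fin n) (Fin n) ℂ) with hVdef
  have hV1 : star V * V = 1 := Matrix.mem_unitaryGroup_iff'.mp hH.eigenvectorUnitary.2
  have hV2 : V * star V = 1 := Matrix.mem_unitaryGroup_iff.mp hH.eigenvectorUnitary.2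
  set ev : Fin n → ℝ := hH.eigenvalues with hevdef
  have hev_pos : ∀ i, 0 < ev i := hA.eigenvalues_pos
  have hev_spec : ∀ i, ev i ∈ spectrum ℝ A := fun i => hH.eigenvalues_mem_spectrum_real i
  have hspec : spectrum ℝ A = Set.range ev := hH.spectrum_real_eq_range_eigenvalues
  -- positivity of k
  have hk0 : 0 < k := by
    obtain ⟨lam0, hlam0, hklam⟩ := hk.1
    rw [hspec] at hlam0
    obtain ⟨i0, rfl⟩ := hlam0
    rw [← hklam]
    exact div_pos (mul_pos (hfpos _ (hev_pos i0)) (hgpos _ (hev_pos i0))) (hev_pos i0)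
  -- cancellation helpers
  have hcanc1 : ∀ Z : Matrix (Fin n) (Fin n) ℂ, star V * (V * Z) = Z := fun Z => by
    rw [← Matrix.mul_assoc, hV1, Matrix.one_mul]
  -- the diagonal matrices
  set Y : Matrix (Fin n) (Fin n) ℂ := star V * X * V with hYdef
  set D : Matrix (Fin n) (Fin n) ℂ := Matrix.diagonal (Complex.ofReal ∘ ev) with hDdef
  set Df : Matrix (Fin n) (Fin n) ℂ := Matrix.diagonal (Complex.ofReal ∘ f ∘ ev) with hDfdef
  set Dg : Matrix (Fin n) (Fin n) ℂ := Matrix.diagonal (Complex.ofReal ∘ g ∘ ev) with hDgdef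
  have hcfcf : cfc f A = V * Df * star V := by
    rw [hH.cfc_eq f]; rfl
  have hcfcg : cfc g A = V * Dg * star V := by
    rw [hH.cfc_eq g]; rfl
  have hAs : A = V * D * star V := hH.spectral_theorem
  have e1 : ∀ (P Q : Matrix (Fin n) (Fin n) ℂ),
      star V * ((V * P * star V) * X * (V * Q * star V)) * V = P * Y * Q := by
    intro P Q
    simp only [hYdef, Matrix.mul_assoc, hcanc1, hV1, Matrix.mul_one]
  -- main matrix identities
  set T : Matrix (Fin n) (Fin n) ℂ := star V * (A * X + X * A) * V with hTdef
  have hT : T = D * Y + Y * D := by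
    rw [hTdef, Matrix.mul_add, Matrix.add_mul, hAs]
    simp only [hYdef, Matrix.mul_assoc, hcanc1, hV1, Matrix.mul_one]
  have hM : star V * (cfc f A * X * cfc g A + cfc g A * X * cfc f A) * V
      = Df * Y * Dg + Dg * Y * Df := by
    rw [Matrix.mul_add, Matrix.add_mul, hcfcf, hcfcg, e1, e1]
  -- the Schur multiplier matrix
  set C : Matrix (Fin n) (Fin n) ℂ := Matrix.of (fun i j =>
    (((f (ev i) * g (ev j) + g (ev i) * f (ev j)) / (ev i + ev j) : ℝ) : ℂ)) with hCdef
  have hsum_pos : ∀ i j : Fin n, (0:ℝ) < ev i + ev j := fun i j => add_pos (hev_pos i) (hev_pos j)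
  have hMC : Df * Y * Dg + Dg * Y * Df = Matrix.of (fun i j => C i j * T i j) := by
    ext i j
    have hs : ((ev i : ℂ) + (ev j : ℂ)) ≠ 0 := by
      rw [← Complex.ofReal_add]
      exact_mod_cast (hsum_pos i j).ne'
    have hTij : T i j = ((ev i : ℂ) + (ev j : ℂ)) * Y i j := by
      rw [hT]
      simp [hDdef, Matrix.add_apply, Matrix.diagonal_mul, Matrix.mul_diagonal]
      ring
    have hLij : (Df * Y * Dg + Dg * Y * Df) i j
        = ((f (ev i) : ℂ) * (g (ev j) : ℂ) + (g (ev i) : ℂ) * (f (ev j) : ℂ)) * Y i j := by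
      simp [hDfdef, hDgdef, Matrix.add_apply, Matrix.diagonal_mul, Matrix.mul_diagonal]
      ring
    rw [hLij, Matrix.of_apply, hCdef, hTij]
    push_cast
    simp only [Matrix.of_apply]
    field_simp
  -- C is PSD
  have hg_ne : ∀ i, (g (ev i) : ℝ) ≠ 0 := fun i => (hgpos _ (hev_pos i)).ne'
  set s : Finset ℝ := Finset.image ev Finset.univ with hsdef
  set e := s.equivFin with hedef
  set lam : Fin s.card → ℝ := fun p => (e.symm p : ℝ) with hlamdef
  have hlam_pos : ∀ p, 0 < lam p := by
    intro p
    obtain ⟨i, -, hi⟩ := Finset.mem_image.mp (e.symm p).2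
    have h' : (0:ℝ) < ((e.symm p : { x // x ∈ s }) : ℝ) := hi ▸ hev_pos i
    exact h'
  have hlam_inj : Function.Injective lam := fun p q hpq => by
    have h' : (e.symm p : ℝ) = (e.symm q : ℝ) := hpq
    exact e.symm.injective (Subtype.ext h')
  have hKw := hK s.card lam hlam_pos hlam_inj
  set c : Fin n → Fin s.card := fun i => e ⟨ev i, Finset.mem_image_of_mem ev (Finset.mem_univ i)⟩
    with hcdef
  have hlamc : ∀ i, lam (c i) = ev i := by
    intro i
    rw [hlamdef, hcdef]
    simp
  set Kreal : Matrix (Fin n) (Fin n) ℝ := Matrix.of (fun i j =>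
    ((f (ev i) / g (ev i)) + (f (ev j) / g (ev j))) / (ev i + ev j)) with hKrdef
  have hKrealPSD : Kreal.PosSemidef := by
    have : Kreal = (Matrix.of fun p q : Fin s.card =>
        ((fun t => f t / g t) (lam p) + (fun t => f t / g t) (lam q)) / (lam p + lam q)).submatrix
        c c := by
      ext i j
      simp [hKrdef, Matrix.submatrix_apply, hlamc]
    rw [this]
    exact hKw.submatrix c
  have hKcPSD : (Kreal.map Complex.ofReal).PosSemidef := posSemidef_map_ofReal hKrealPSD
  have hCPSD : C.PosSemidef := by
    have hCeq : C = Dg * (Kreal.map Complex.ofReal) * Dgᴴ := by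
      ext i j
      rw [hDgdef, Matrix.diagonal_conjTranspose]
      simp only [Matrix.diagonal_mul, Matrix.mul_diagonal, Matrix.map_apply, hKrdef,
        Matrix.of_apply, hCdef, Pi.star_apply, Function.comp_apply, Complex.star_def,
        Complex.conj_ofReal]
      have hgi : ((g (ev i)):ℂ) ≠ 0 := Complex.ofReal_ne_zero.mpr (hg_ne i)
      have hgj : ((g (ev j)):ℂ) ≠ 0 := Complex.ofReal_ne_zero.mpr (hg_ne j)
      have hs : ((ev i:ℂ) + (ev j:ℂ)) ≠ 0 := by
        rw [← Complex.ofReal_add]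
        exact_mod_cast (hsum_pos i j).ne'
      push_cast
      field_simp
    rw [hCeq]
    exact hKcPSD.mul_mul_conjTranspose_same Dg
  -- diagonal bound
  have hdiag : ∀ i, (C i i).re ≤ k := by
    intro i
    have h1 : (C i i).re = f (ev i) * g (ev i) / ev i := by
      rw [hCdef]
      simp only [Matrix.of_apply, Complex.ofReal_re]
      rw [div_eq_div_iff (hsum_pos i i).ne' (hev_pos i).ne']
      ring
    rw [h1]
    exact hk.2 ⟨ev i, hev_spec i, rfl⟩
  -- conclude
  rw [← numRadius_unitary_conj (cfc f A * X * cfc g A + cfc g A * X * cfc f A) V hV1 hV2,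
    ← numRadius_unitary_conj (A * X + X * A) V hV1 hV2, hM, hMC]
  exact schur_bound C T hCPSD k hk0.le hdiag
end

section
/- Let A, B ∈ M_n(ℂ) be positive definite matrices, let X ∈ M_n(ℂ) be arbitrary, and let f and g be continuous positive functions on (0,∞) such that h(t) = f(t)/g(t) is a Kwong function on (0,∞). Set k' = max{ f(λ)g(λ)/λ : λ ∈ σ(A) ∪ σ(B) }. Write H_{f,g}(A,B) = f(A) X g(B) + g(A) X f(B) and H_{f,g}(B,A) = f(B) X g(A) + g(B) X f(A). Then, for both choices of sign, ω( H_{f,g}(A,B) ± H_{f,g}(B,A) ) ≤ k' · ( ω( (A+B)X + X(A+B) ) + ω( (A−B)X − X(A−B) ) ). -/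
open scoped ComplexOrder

open Matrix

section NRBasic

variable {ι : Type*} [Fintype ι]

private lemma norm_sq_eq (x : EuclideanSpace ℂ ι) :
    ‖x‖ ^ 2 = ∑ i, Complex.normSq (x i) := by
  rw [EuclideanSpace.norm_eq, Real.sq_sqrt (by positivity)]
  simp [Complex.sq_norm]

private lemma norm_one_iff (x : EuclideanSpace ℂ ι) :
    ‖x‖ = 1 ↔ ∑ i, Complex.normSq (x i) = 1 := by
  rw [← norm_sq_eq]
  constructor
  · intro h; rw [h]; norm_num
  · intro h; nlinarith [norm_nonneg x]

private lemma abs_val_le_sum' (M : Matrix ι ι ℂ) (y : ι → ℂ)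
    (hyi : ∀ i, ‖y i‖ ≤ 1) :
    ‖dotProduct (star y) (M.mulVec y)‖ ≤
      ∑ i, ∑ j, ‖M i j‖ := by
  calc ‖dotProduct (star y) (M.mulVec y)‖
      ≤ ∑ i, ‖(star y) i * (M.mulVec y) i‖ := by
        rw [dotProduct]; exact norm_sum_le _ _
    _ ≤ ∑ i, ∑ j, ‖M i j‖ := by
        apply Finset.sum_le_sum; intro i _
        rw [norm_mul]
        have h3 : ‖(star y) i‖ ≤ 1 := by
          simpa [Pi.star_apply, Complex.norm_conj] using hyi i
        calc ‖(star y) i‖ * ‖(M.mulVec y) i‖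
            ≤ 1 * ‖(M.mulVec y) i‖ :=
              mul_le_mul_of_nonneg_right h3 (norm_nonneg _)
          _ = ‖∑ j, M i j * y j‖ := by
              rw [one_mul]; rfl
          _ ≤ ∑ j, ‖M i j * y j‖ := norm_sum_le _ _
          _ ≤ ∑ j, ‖M i j‖ := by
            apply Finset.sum_le_sum; intro j _
            rw [norm_mul]
            exact mul_le_of_le_one_right (norm_nonneg _) (hyi j)

private lemma abs_val_le_sum (M : Matrix ι ι ℂ) (x : EuclideanSpace ℂ ι) (hx : ‖x‖ = 1) :
    ‖dotProduct (star (x : ι → ℂ)) (M.mulVec x)‖ ≤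
      ∑ i, ∑ j, ‖M i j‖ := by
  apply abs_val_le_sum'
  intro i
  have h2 := (norm_one_iff x).mp hx
  have h3 := Finset.single_le_sum (f := fun i => Complex.normSq ((x : ι → ℂ) i))
    (fun i _ => Complex.normSq_nonneg _) (Finset.mem_univ i)
  have h1 : ‖(x : ι → ℂ) i‖ ^ 2 ≤ 1 := by
    rw [Complex.sq_norm]; linarith
  nlinarith [norm_nonneg ((x : ι → ℂ) i)]

private lemma mem_le_nr (M : Matrix ι ι ℂ) {x : EuclideanSpace ℂ ι} (hx : ‖x‖ = 1) :
    ‖dotProduct (star (x : ι → ℂ)) (M.mulVec x)‖ ≤ numRadius M :=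
  le_csSup ⟨∑ i, ∑ j, ‖M i j‖, by
    rintro r ⟨z, hz, rfl⟩; exact abs_val_le_sum M z hz⟩ ⟨x, hx, rfl⟩

private lemma nr_nonneg [Nonempty ι] [DecidableEq ι] (M : Matrix ι ι ℂ) : 0 ≤ numRadius M := by
  have h := mem_le_nr M (x := EuclideanSpace.single (Classical.arbitrary ι) (1 : ℂ))
    (by simp [EuclideanSpace.norm_single])
  exact le_trans (norm_nonneg _) h

private lemma nr_le_of (M : Matrix ι ι ℂ) {c : ℝ} (hc : 0 ≤ c)
    (h : ∀ x : EuclideanSpace ℂ ι, ‖x‖ = 1 →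
      ‖dotProduct (star (x : ι → ℂ)) (M.mulVec x)‖ ≤ c) :
    numRadius M ≤ c :=
  Real.sSup_le (by rintro r ⟨x, hx, rfl⟩; exact h x hx) hc

private lemma abs_le_nr (M : Matrix ι ι ℂ) (y : ι → ℂ) :
    ‖dotProduct (star y) (M.mulVec y)‖ ≤
      numRadius M * ∑ i, Complex.normSq (y i) := by
  by_cases hy : y = 0
  · subst hy
    simp [dotProduct]
  · have hpos : 0 < ‖(WithLp.toLp 2 y : EuclideanSpace ℂ ι)‖ := by
      rw [norm_pos_iff]; exact fun h => hy (by simpa using congrArg WithLp.ofLp h)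
    set c : ℝ := ‖(WithLp.toLp 2 y : EuclideanSpace ℂ ι)‖ with hc
    have hx : ‖(WithLp.toLp 2 ((c : ℂ)⁻¹ • y) : EuclideanSpace ℂ ι)‖ = 1 := by
      have he : (WithLp.toLp 2 ((c : ℂ)⁻¹ • y) : EuclideanSpace ℂ ι)
          = ((c : ℂ)⁻¹ • (WithLp.toLp 2 y : EuclideanSpace ℂ ι)) := rfl
      rw [he, norm_smul, norm_inv, Complex.norm_real, Real.norm_eq_abs, abs_of_pos hpos]
      exact inv_mul_cancel₀ hpos.ne'
    have key := mem_le_nr M hx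
    have hval : dotProduct (star ((c : ℂ)⁻¹ • y)) (M.mulVec ((c : ℂ)⁻¹ • y))
        = (c : ℂ)⁻¹ * ((c : ℂ)⁻¹ * dotProduct (star y) (M.mulVec y)) := by
      rw [star_smul, Matrix.mulVec_smul, smul_dotProduct, dotProduct_smul]
      simp only [smul_eq_mul, Complex.star_def, ← Complex.ofReal_inv, Complex.conj_ofReal]
    rw [show dotProduct (star (WithLp.ofLp (WithLp.toLp 2 ((c : ℂ)⁻¹ • y))))
        (M.mulVec (WithLp.ofLp (WithLp.toLp 2 ((c : ℂ)⁻¹ • y))))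
        = (c : ℂ)⁻¹ * ((c : ℂ)⁻¹ * dotProduct (star y) (M.mulVec y)) from hval] at key
    rw [norm_mul, norm_mul, norm_inv, Complex.norm_real, Real.norm_eq_abs, abs_of_pos hpos] at key
    have hsum : ∑ i, Complex.normSq (y i) = c ^ 2 := by
      rw [hc, norm_sq_eq (WithLp.toLp 2 y : EuclideanSpace ℂ ι)]
    rw [hsum]
    set A := ‖dotProduct (star y) (M.mulVec y)‖ with hA
    have hA0 : 0 ≤ A := norm_nonneg _
    have hcne : c ≠ 0 := hpos.ne'
    have h5 : c ^ 2 * (c⁻¹ * (c⁻¹ * A)) = A := by field_simp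
    calc A = c ^ 2 * (c⁻¹ * (c⁻¹ * A)) := h5.symm
      _ ≤ c ^ 2 * numRadius M := mul_le_mul_of_nonneg_left key (sq_nonneg c)
      _ = numRadius M * c ^ 2 := mul_comm _ _

private lemma pol_add (P : Matrix ι ι ℂ) (u v : ι → ℂ) :
    ‖dotProduct (star u) (P.mulVec v) +
        dotProduct (star v) (P.mulVec u)‖
      ≤ numRadius P * (∑ i, Complex.normSq (u i) + ∑ i, Complex.normSq (v i)) := by
  have h1 := abs_le_nr P (u + v)
  have h2 := abs_le_nr P (u - v)
  have e1 : dotProduct (star (u + v)) (P.mulVec (u + v))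
      = dotProduct (star u) (P.mulVec u)
        + (dotProduct (star u) (P.mulVec v) + dotProduct (star v) (P.mulVec u))
        + dotProduct (star v) (P.mulVec v) := by
    rw [star_add, Matrix.mulVec_add, add_dotProduct, dotProduct_add,
      dotProduct_add]
    ring
  have e2 : dotProduct (star (u - v)) (P.mulVec (u - v))
      = dotProduct (star u) (P.mulVec u)
        - (dotProduct (star u) (P.mulVec v) + dotProduct (star v) (P.mulVec u))
        + dotProduct (star v) (P.mulVec v) := by
    rw [star_sub, Matrix.mulVec_sub, sub_dotProduct, dotProduct_sub,
      dotProduct_sub]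
    ring
  have e3 : dotProduct (star u) (P.mulVec v) + dotProduct (star v) (P.mulVec u)
      = (1/2 : ℂ) * (dotProduct (star (u + v)) (P.mulVec (u + v))
          - dotProduct (star (u - v)) (P.mulVec (u - v))) := by
    rw [e1, e2]; ring
  have e4 : ∑ i, Complex.normSq ((u + v) i) + ∑ i, Complex.normSq ((u - v) i)
      = 2 * (∑ i, Complex.normSq (u i) + ∑ i, Complex.normSq (v i)) := by
    have hpt : ∀ i, Complex.normSq ((u + v) i) + Complex.normSq ((u - v) i)
        = 2 * (Complex.normSq (u i) + Complex.normSq (v i)) := by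
      intro i
      simp only [Pi.add_apply, Pi.sub_apply, Complex.normSq_apply, Complex.add_re,
        Complex.add_im, Complex.sub_re, Complex.sub_im]
      ring
    calc ∑ i, Complex.normSq ((u + v) i) + ∑ i, Complex.normSq ((u - v) i)
        = ∑ i, (Complex.normSq ((u + v) i) + Complex.normSq ((u - v) i)) :=
          Finset.sum_add_distrib.symm
      _ = ∑ i, 2 * (Complex.normSq (u i) + Complex.normSq (v i)) :=
          Finset.sum_congr rfl fun i _ => hpt i
      _ = 2 * (∑ i, Complex.normSq (u i) + ∑ i, Complex.normSq (v i)) := by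
          rw [← Finset.mul_sum, Finset.sum_add_distrib]
  rw [e3, norm_mul]
  have habs : ‖(1/2 : ℂ)‖ = 1/2 := by norm_num [norm_div]
  rw [habs]
  have htri : ‖dotProduct (star (u + v)) (P.mulVec (u + v))
      - dotProduct (star (u - v)) (P.mulVec (u - v))‖
      ≤ ‖dotProduct (star (u + v)) (P.mulVec (u + v))‖
        + ‖dotProduct (star (u - v)) (P.mulVec (u - v))‖ := by
    calc ‖dotProduct (star (u + v)) (P.mulVec (u + v))
        - dotProduct (star (u - v)) (P.mulVec (u - v))‖
        = ‖dotProduct (star (u + v)) (P.mulVec (u + v))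
          + -(dotProduct (star (u - v)) (P.mulVec (u - v)))‖ := by rw [sub_eq_add_neg]
      _ ≤ ‖dotProduct (star (u + v)) (P.mulVec (u + v))‖
          + ‖-(dotProduct (star (u - v)) (P.mulVec (u - v)))‖ :=
            norm_add_le _ _
      _ = ‖dotProduct (star (u + v)) (P.mulVec (u + v))‖
          + ‖dotProduct (star (u - v)) (P.mulVec (u - v))‖ := by
            rw [norm_neg]
  have h5 : numRadius P * (∑ i, Complex.normSq ((u + v) i))
      + numRadius P * (∑ i, Complex.normSq ((u - v) i))
      = numRadius P * (2 * (∑ i, Complex.normSq (u i) + ∑ i, Complex.normSq (v i))) := by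
    rw [← mul_add, e4]
  linarith [h1, h2, htri, h5]

private lemma pol_sub (P : Matrix ι ι ℂ) (u v : ι → ℂ) :
    ‖dotProduct (star u) (P.mulVec v) -
        dotProduct (star v) (P.mulVec u)‖
      ≤ numRadius P * (∑ i, Complex.normSq (u i) + ∑ i, Complex.normSq (v i)) := by
  have h := pol_add P u (Complex.I • v)
  have e1 : dotProduct (star u) (P.mulVec (Complex.I • v))
        + dotProduct (star (Complex.I • v)) (P.mulVec u)
      = Complex.I * (dotProduct (star u) (P.mulVec v)
          - dotProduct (star v) (P.mulVec u)) := by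
    rw [Matrix.mulVec_smul, dotProduct_smul, star_smul, smul_dotProduct]
    simp only [smul_eq_mul, Complex.star_def, Complex.conj_I]
    ring
  have e2 : ∑ i, Complex.normSq ((Complex.I • v) i) = ∑ i, Complex.normSq (v i) := by
    apply Finset.sum_congr rfl; intro i _
    simp [Complex.normSq_mul]
  rw [e1, e2, norm_mul, Complex.norm_I, one_mul] at h
  exact h

private lemma nr_add_le [Nonempty ι] [DecidableEq ι] (M N : Matrix ι ι ℂ) :
    numRadius (M + N) ≤ numRadius M + numRadius N := by
  apply nr_le_of _ (add_nonneg (nr_nonneg M) (nr_nonneg N))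
  intro x hx
  have hxs : ∑ i, Complex.normSq ((x : ι → ℂ) i) = 1 := (norm_one_iff x).mp hx
  have h1 := abs_le_nr M (x : ι → ℂ)
  have h2 := abs_le_nr N (x : ι → ℂ)
  rw [hxs, mul_one] at h1 h2
  calc ‖dotProduct (star (x : ι → ℂ)) ((M + N).mulVec x)‖
      = ‖dotProduct (star (x : ι → ℂ)) (M.mulVec x)
          + dotProduct (star (x : ι → ℂ)) (N.mulVec x)‖ := by
        rw [Matrix.add_mulVec, dotProduct_add]
    _ ≤ _ + _ := norm_add_le _ _
    _ ≤ numRadius M + numRadius N := add_le_add h1 h2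

private lemma conj_dot (P V : Matrix ι ι ℂ) (x : ι → ℂ) :
    dotProduct (star x) ((V * P * Vᴴ).mulVec x)
      = dotProduct (star (Vᴴ.mulVec x)) (P.mulVec (Vᴴ.mulVec x)) := by
  rw [← Matrix.mulVec_mulVec, ← Matrix.mulVec_mulVec, Matrix.dotProduct_mulVec,
    Matrix.star_mulVec, Matrix.conjTranspose_conjTranspose, ← Matrix.dotProduct_mulVec]

private lemma dot_self_eq (z : ι → ℂ) :
    dotProduct (star z) z = ((∑ i, Complex.normSq (z i) : ℝ) : ℂ) := by
  rw [dotProduct]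
  push_cast
  apply Finset.sum_congr rfl
  intro i _
  simp [Pi.star_apply, Complex.star_def, Complex.normSq_eq_conj_mul_self]

private lemma nr_conj_le [Nonempty ι] [DecidableEq ι] {U : Matrix ι ι ℂ}
    (hU1 : U * Uᴴ = 1) (W : Matrix ι ι ℂ) :
    numRadius (U * W * Uᴴ) ≤ numRadius W := by
  apply nr_le_of _ (nr_nonneg W)
  intro x hx
  rw [conj_dot]
  set y : ι → ℂ := Uᴴ.mulVec (x : ι → ℂ) with hy
  have hyn : ∑ i, Complex.normSq (y i) = 1 := by
    have h1 : dotProduct (star y) y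
        = dotProduct (star (x : ι → ℂ)) (x : ι → ℂ) := by
      rw [hy, Matrix.star_mulVec, Matrix.conjTranspose_conjTranspose,
        ← Matrix.dotProduct_mulVec, Matrix.mulVec_mulVec, hU1, Matrix.one_mulVec]
    rw [dot_self_eq, dot_self_eq] at h1
    have h2 := (norm_one_iff x).mp hx
    have h3 := Complex.ofReal_inj.mp h1
    rw [h3, h2]
  have := abs_le_nr W y
  rw [hyn, mul_one] at this
  exact this

end NRBasic

section PSDsqrt

open scoped MatrixOrder Matrix.Norms.L2Operator

private lemma psd_eq_ct {m 𝕜 : Type*} [RCLike 𝕜] [Fintype m] {K : Matrix m m 𝕜}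
    (hK : K.PosSemidef) : ∃ B : Matrix m m 𝕜, K = Bᴴ * B := by
  classical
  obtain ⟨B, hB⟩ := CStarAlgebra.nonneg_iff_eq_star_mul_self.mp hK.nonneg
  exact ⟨B, hB⟩

end PSDsqrt

section PSD

variable {ι : Type*} [Fintype ι]

private lemma psd_map {m : Type*} [Fintype m] {K : Matrix m m ℝ} (hK : K.PosSemidef) :
    (K.map (fun t => (t : ℂ))).PosSemidef := by
  obtain ⟨B, rfl⟩ := psd_eq_ct hK
  have hmap : (Bᴴ * B).map (fun t => (t : ℂ))
      = (B.map (fun t => (t : ℂ)))ᴴ * (B.map (fun t => (t : ℂ))) := by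
    ext i j
    simp only [Matrix.map_apply, Matrix.mul_apply, Matrix.conjTranspose_apply]
    push_cast
    apply Finset.sum_congr rfl
    intro k _
    simp [Complex.star_def, Complex.conj_ofReal]
  rw [hmap]
  exact Matrix.posSemidef_conjTranspose_mul_self _

private lemma single_dot (M : Matrix ι ι ℂ) [DecidableEq ι] (i : ι) :
    dotProduct (star (Pi.single i 1 : ι → ℂ)) (M.mulVec (Pi.single i 1)) = M i i := by
  rw [Matrix.mulVec_single]
  simp [dotProduct, Pi.single_apply, Pi.star_apply, Finset.sum_ite_eq',
    apply_ite (starRingEnd ℂ)]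

private lemma conj_mul_re (z : ℂ) : ((starRingEnd ℂ) z * z).re = Complex.normSq z := by
  simp [Complex.mul_re, Complex.normSq_apply]

private lemma nr_hadamard_le [Nonempty ι] [DecidableEq ι] {M : Matrix ι ι ℂ}
    (hM : M.PosSemidef) {c : ℝ} (hc : ∀ i, (M i i).re ≤ c) (W : Matrix ι ι ℂ) :
    numRadius (Matrix.hadamard M W) ≤ c * numRadius W := by
  have hc0 : 0 ≤ c := by
    have i := Classical.arbitrary ι
    have h1 := hM.dotProduct_mulVec_nonneg (Pi.single i 1)
    rw [single_dot] at h1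
    have h2 : 0 ≤ (M i i).re := by
      have := Complex.le_def.mp h1
      simpa using this.1
    linarith [hc i]
  obtain ⟨N, hN⟩ := psd_eq_ct hM
  set Amat : ι → Matrix ι ι ℂ := fun k =>
    Matrix.diagonal (fun i => (starRingEnd ℂ) (N k i)) * W *
      (Matrix.diagonal (fun i => (starRingEnd ℂ) (N k i)))ᴴ with hAmat
  have hdec : Matrix.hadamard M W = ∑ k, Amat k := by
    ext i j
    rw [Matrix.sum_apply]
    have hterm : ∀ k, Amat k i j = (starRingEnd ℂ) (N k i) * W i j * N k j := by
      intro k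
      show ((Matrix.diagonal fun i => (starRingEnd ℂ) (N k i)) * W *
        (Matrix.diagonal fun i => (starRingEnd ℂ) (N k i))ᴴ) i j = _
      rw [Matrix.diagonal_conjTranspose, Matrix.mul_diagonal, Matrix.diagonal_mul]
      simp [Pi.star_def, Complex.star_def]
    rw [Finset.sum_congr rfl fun k _ => hterm k]
    rw [Matrix.hadamard_apply, hN, Matrix.mul_apply, Finset.sum_mul]
    apply Finset.sum_congr rfl
    intro k _
    simp only [Matrix.conjTranspose_apply, Complex.star_def]
    ring
  apply nr_le_of _ (mul_nonneg hc0 (nr_nonneg W))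
  intro x hx
  have hxs : ∑ i, Complex.normSq ((x : ι → ℂ) i) = 1 := (norm_one_iff x).mp hx
  set y : ι → ι → ℂ := fun k =>
    ((Matrix.diagonal fun i => (starRingEnd ℂ) (N k i))ᴴ).mulVec (x : ι → ℂ) with hy
  have hlin : ∀ (s : Finset ι), dotProduct (star (x : ι → ℂ))
        ((∑ k ∈ s, Amat k).mulVec (x : ι → ℂ))
      = ∑ k ∈ s, dotProduct (star (x : ι → ℂ)) ((Amat k).mulVec (x : ι → ℂ)) := by
    intro s
    induction s using Finset.induction_on with
    | empty => simp [dotProduct]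
    | insert a s h ih =>
        rw [Finset.sum_insert h, Finset.sum_insert h, Matrix.add_mulVec,
          dotProduct_add, ih]
  have hval : dotProduct (star (x : ι → ℂ)) ((Matrix.hadamard M W).mulVec x)
      = ∑ k, dotProduct (star (y k)) (W.mulVec (y k)) := by
    rw [hdec, hlin]
    exact Finset.sum_congr rfl fun k _ => conj_dot W _ (x : ι → ℂ)
  have hyk : ∀ k i, y k i = N k i * (x : ι → ℂ) i := by
    intro k i
    rw [hy]
    simp only [Matrix.diagonal_conjTranspose]
    rw [Matrix.mulVec_diagonal]
    simp [Pi.star_def, Complex.star_def]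
  have hSk : ∀ k, ∑ i, Complex.normSq (y k i)
      = ∑ i, Complex.normSq (N k i) * Complex.normSq ((x : ι → ℂ) i) := by
    intro k
    apply Finset.sum_congr rfl
    intro i _
    rw [hyk, Complex.normSq_mul]
  have hdiagsum : ∀ j, ∑ k, Complex.normSq (N k j) = (M j j).re := by
    intro j
    rw [hN, Matrix.mul_apply, Complex.re_sum]
    apply Finset.sum_congr rfl
    intro k _
    simp [Matrix.conjTranspose_apply, Complex.star_def, conj_mul_re, Complex.normSq_apply]
  have hbound : ∑ k, ∑ i, Complex.normSq (N k i) * Complex.normSq ((x : ι → ℂ) i) ≤ c := by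
    rw [Finset.sum_comm]
    have : ∀ i, ∑ k, Complex.normSq (N k i) * Complex.normSq ((x : ι → ℂ) i)
        = (M i i).re * Complex.normSq ((x : ι → ℂ) i) := by
      intro i
      rw [← Finset.sum_mul, hdiagsum]
    rw [Finset.sum_congr rfl fun i _ => this i]
    calc ∑ i, (M i i).re * Complex.normSq ((x : ι → ℂ) i)
        ≤ ∑ i, c * Complex.normSq ((x : ι → ℂ) i) := by
          apply Finset.sum_le_sum
          intro i _
          exact mul_le_mul_of_nonneg_right (hc i) (Complex.normSq_nonneg _)
      _ = c := by rw [← Finset.mul_sum, hxs, mul_one]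
  calc ‖dotProduct (star (x : ι → ℂ)) ((Matrix.hadamard M W).mulVec x)‖
      = ‖∑ k, dotProduct (star (y k)) (W.mulVec (y k))‖ := by rw [hval]
    _ ≤ ∑ k, ‖dotProduct (star (y k)) (W.mulVec (y k))‖ :=
        norm_sum_le _ _
    _ ≤ ∑ k, numRadius W * ∑ i, Complex.normSq (y k i) :=
        Finset.sum_le_sum fun k _ => abs_le_nr W (y k)
    _ = numRadius W * ∑ k, ∑ i, Complex.normSq (N k i) * Complex.normSq ((x : ι → ℂ) i) := by
        rw [← Finset.mul_sum]
        congr 1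
        exact Finset.sum_congr rfl fun k _ => hSk k
    _ ≤ numRadius W * c := mul_le_mul_of_nonneg_left hbound (nr_nonneg W)
    _ = c * numRadius W := mul_comm _ _

end PSD

section Kwong

private lemma kwong_matrix_psd {h : ℝ → ℝ} (hKw : IsKwong h) {ι : Type*} [Fintype ι]
    [DecidableEq ι] (d : ι → ℝ) (hd : ∀ i, 0 < d i) :
    (Matrix.of fun i j : ι => (((h (d i) + h (d j)) / (d i + d j) : ℝ) : ℂ)).PosSemidef := by
  classical
  set s : Finset ℝ := Finset.image d Finset.univ with hs
  set m := s.card with hm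
  set e := s.orderIsoOfFin rfl with he
  set lam : Fin m → ℝ := fun i => (e i : ℝ) with hlam
  have hmem : ∀ a : ι, d a ∈ s := fun a => Finset.mem_image_of_mem d (Finset.mem_univ a)
  have hlampos : ∀ i, 0 < lam i := by
    intro i
    have hin : (e i : ℝ) ∈ s := (e i).2
    obtain ⟨a, _, ha⟩ := Finset.mem_image.mp hin
    rw [hlam]
    simpa [← ha] using hd a
  have hinj : Function.Injective lam := by
    intro i j hij
    exact e.injective (Subtype.ext hij)
  have hK' := hKw m lam hlampos hinj
  set cc : ι → Fin m := fun a => e.symm ⟨d a, hmem a⟩ with hcc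
  have hlc : ∀ a, lam (cc a) = d a := by
    intro a
    rw [hlam, hcc]
    simp
  set S : Matrix ι (Fin m) ℂ := Matrix.of fun a i => if i = cc a then 1 else 0 with hS
  have hid : (Matrix.of fun i j : ι => (((h (d i) + h (d j)) / (d i + d j) : ℝ) : ℂ))
      = S * ((Matrix.of fun i j : Fin m =>
          ((h (lam i) + h (lam j)) / (lam i + lam j) : ℝ)).map (fun t => (t : ℂ))) * Sᴴ := by
    ext a b
    rw [Matrix.mul_apply]
    have hcol : ∀ j, (S * (Matrix.of fun i j : Fin m =>
        ((h (lam i) + h (lam j)) / (lam i + lam j) : ℝ)).map (fun t => (t : ℂ))) a j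
        = (((h (d a) + h (lam j)) / (d a + lam j) : ℝ) : ℂ) := by
      intro j
      rw [Matrix.mul_apply]
      have : ∀ i, S a i * ((Matrix.of fun i j : Fin m =>
          ((h (lam i) + h (lam j)) / (lam i + lam j) : ℝ)).map (fun t => (t : ℂ))) i j
          = if i = cc a then (((h (lam i) + h (lam j)) / (lam i + lam j) : ℝ) : ℂ) else 0 := by
        intro i
        rw [hS]
        simp only [Matrix.of_apply, Matrix.map_apply, ite_mul, one_mul, zero_mul]
      rw [Finset.sum_congr rfl fun i _ => this i, Finset.sum_ite_eq' Finset.univ (cc a)]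
      simp [hlc a]
    rw [Finset.sum_congr rfl fun j _ => by rw [hcol j]]
    have hstar : ∀ j, Sᴴ j b = if j = cc b then 1 else 0 := by
      intro j
      rw [Matrix.conjTranspose_apply, hS]
      simp only [Matrix.of_apply]
      split <;> simp
    rw [Finset.sum_congr rfl fun j _ => by rw [hstar j]]
    have : ∀ j, (((h (d a) + h (lam j)) / (d a + lam j) : ℝ) : ℂ) * (if j = cc b then 1 else 0)
        = if j = cc b then (((h (d a) + h (lam j)) / (d a + lam j) : ℝ) : ℂ) else 0 := by
      intro j
      split <;> simp
    rw [Finset.sum_congr rfl fun j _ => this j, Finset.sum_ite_eq' Finset.univ (cc b)]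
    simp [hlc b]
  rw [hid]
  exact (psd_map hK').mul_mul_conjTranspose_same S

private lemma M_psd {ι : Type*} [Fintype ι] [DecidableEq ι] (f g : ℝ → ℝ) (d : ι → ℝ)
    (hd : ∀ i, 0 < d i) (hg : ∀ i, 0 < g (d i)) (hKw : IsKwong fun t => f t / g t) :
    (Matrix.of fun i j : ι =>
      (((f (d i) * g (d j) + g (d i) * f (d j)) / (d i + d j) : ℝ) : ℂ)).PosSemidef := by
  have hstar : (Matrix.diagonal (fun i : ι => (g (d i) : ℂ)))ᴴ
      = Matrix.diagonal (fun i : ι => (g (d i) : ℂ)) := by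
    rw [Matrix.diagonal_conjTranspose]
    congr 1
    funext i
    simp [Pi.star_def, Complex.star_def, Complex.conj_ofReal]
  have hid : (Matrix.of fun i j : ι =>
      (((f (d i) * g (d j) + g (d i) * f (d j)) / (d i + d j) : ℝ) : ℂ))
      = Matrix.diagonal (fun i : ι => (g (d i) : ℂ)) *
        (Matrix.of fun i j : ι =>
          ((((fun t => f t / g t) (d i) + (fun t => f t / g t) (d j)) / (d i + d j) : ℝ) : ℂ)) *
        (Matrix.diagonal (fun i : ι => (g (d i) : ℂ)))ᴴ := by
    rw [hstar]
    ext i j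
    rw [Matrix.mul_diagonal, Matrix.diagonal_mul, Matrix.of_apply, Matrix.of_apply]
    simp only []
    rw [← Complex.ofReal_mul, ← Complex.ofReal_mul]
    congr 1
    have h1 : d i + d j ≠ 0 := ne_of_gt (add_pos (hd i) (hd j))
    have h2 : g (d i) ≠ 0 := (hg i).ne'
    have h3 : g (d j) ≠ 0 := (hg j).ne'
    field_simp
  rw [hid]
  exact (kwong_matrix_psd hKw d hd).mul_mul_conjTranspose_same _

end Kwong

section LemS

private lemma lemS {ι : Type*} [Fintype ι] [DecidableEq ι] [Nonempty ι]
    {U : Matrix ι ι ℂ} (hU1 : U * Uᴴ = 1) (hU2 : Uᴴ * U = 1)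
    (d : ι → ℝ) (hd : ∀ i, 0 < d i) (f g : ℝ → ℝ)
    (hf : ∀ i, 0 < f (d i)) (hg : ∀ i, 0 < g (d i)) (hKw : IsKwong fun t => f t / g t)
    {k : ℝ} (hk : ∀ i, f (d i) * g (d i) / d i ≤ k) (Y : Matrix ι ι ℂ) :
    numRadius (U * Matrix.diagonal (fun i => (f (d i) : ℂ)) * Uᴴ * Y *
        (U * Matrix.diagonal (fun i => (g (d i) : ℂ)) * Uᴴ)
      + U * Matrix.diagonal (fun i => (g (d i) : ℂ)) * Uᴴ * Y *
        (U * Matrix.diagonal (fun i => (f (d i) : ℂ)) * Uᴴ))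
      ≤ k * numRadius (U * Matrix.diagonal (fun i => (d i : ℂ)) * Uᴴ * Y
          + Y * (U * Matrix.diagonal (fun i => (d i : ℂ)) * Uᴴ)) := by
  have hk0 : 0 ≤ k := by
    have i := Classical.arbitrary ι
    have := hk i
    have h1 : 0 < f (d i) * g (d i) / d i := div_pos (mul_pos (hf i) (hg i)) (hd i)
    linarith
  set Df := Matrix.diagonal (fun i => (f (d i) : ℂ)) with hDf
  set Dg := Matrix.diagonal (fun i => (g (d i) : ℂ)) with hDg
  set Dd := Matrix.diagonal (fun i => (d i : ℂ)) with hDd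
  set Z := Uᴴ * Y * U with hZ
  set Mm := Matrix.of fun i j : ι =>
    (((f (d i) * g (d j) + g (d i) * f (d j)) / (d i + d j) : ℝ) : ℂ) with hMm
  set W := Dd * Z + Z * Dd with hW
  have e1 : ∀ (D E : Matrix ι ι ℂ), U * D * Uᴴ * Y * (U * E * Uᴴ) = U * (D * Z * E) * Uᴴ := by
    intro D E
    rw [hZ]
    simp only [Matrix.mul_assoc]
  have h1 : Df * Z * Dg + Dg * Z * Df = Matrix.hadamard Mm W := by
    ext i j
    have hWij : W i j = (d i : ℂ) * Z i j + Z i j * (d j : ℂ) := by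
      rw [hW, Matrix.add_apply, Matrix.diagonal_mul, Matrix.mul_diagonal]
    rw [Matrix.hadamard_apply, hWij, Matrix.add_apply, hDf, hDg,
      Matrix.mul_diagonal, Matrix.diagonal_mul, Matrix.mul_diagonal, Matrix.diagonal_mul,
      hMm, Matrix.of_apply]
    have hsc : ((((f (d i) * g (d j) + g (d i) * f (d j)) / (d i + d j) : ℝ)) : ℂ)
          * ((d i : ℂ) + (d j : ℂ))
        = (f (d i) : ℂ) * (g (d j) : ℂ) + (g (d i) : ℂ) * (f (d j) : ℂ) := by
      have h1 : (d i : ℝ) + d j ≠ 0 := ne_of_gt (add_pos (hd i) (hd j))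
      rw [← Complex.ofReal_add, ← Complex.ofReal_mul, div_mul_cancel₀ _ h1]
      push_cast
      ring
    linear_combination (-(Z i j)) * hsc
  have hmain : U * Df * Uᴴ * Y * (U * Dg * Uᴴ) + U * Dg * Uᴴ * Y * (U * Df * Uᴴ)
      = U * Matrix.hadamard Mm W * Uᴴ := by
    rw [e1, e1, ← Matrix.add_mul, ← Matrix.mul_add, h1]
  have hWconj : W = Uᴴ * (U * Dd * Uᴴ * Y + Y * (U * Dd * Uᴴ)) * U := by
    have hx1 : ∀ P Q : Matrix ι ι ℂ, Uᴴ * (P + Q) * U = Uᴴ * P * U + Uᴴ * Q * U := by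
      intro P Q
      rw [Matrix.mul_add, Matrix.add_mul]
    rw [hx1, hW, hZ]
    congr 1
    · -- Dd * (Uᴴ * Y * U) = Uᴴ * (U * Dd * Uᴴ * Y) * U
      calc Dd * (Uᴴ * Y * U) = (Uᴴ * U) * Dd * (Uᴴ * Y * U) := by rw [hU2, Matrix.one_mul]
        _ = Uᴴ * (U * Dd * Uᴴ * Y) * U := by simp only [Matrix.mul_assoc]
    · calc (Uᴴ * Y * U) * Dd = (Uᴴ * Y * U) * Dd * (Uᴴ * U) := by rw [hU2, Matrix.mul_one]
        _ = Uᴴ * (Y * (U * Dd * Uᴴ)) * U := by simp only [Matrix.mul_assoc]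
  have hdiag : ∀ i, (Mm i i).re ≤ k := by
    intro i
    have hval : (f (d i) * g (d i) + g (d i) * f (d i)) / (d i + d i)
        = f (d i) * g (d i) / d i := by
      have h1 : (d i : ℝ) ≠ 0 := (hd i).ne'
      field_simp
    have : (Mm i i).re = f (d i) * g (d i) / d i := by
      rw [hMm, Matrix.of_apply, Complex.ofReal_re, hval]
    rw [this]
    exact hk i
  rw [hmain]
  calc numRadius (U * Matrix.hadamard Mm W * Uᴴ)
      ≤ numRadius (Matrix.hadamard Mm W) := nr_conj_le hU1 _
    _ ≤ k * numRadius W := nr_hadamard_le (M_psd f g d hd hg hKw) hdiag W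
    _ ≤ k * numRadius (U * Dd * Uᴴ * Y + Y * (U * Dd * Uᴴ)) := by
        apply mul_le_mul_of_nonneg_left _ hk0
        rw [hWconj]
        have := nr_conj_le (U := Uᴴ) (by rw [Matrix.conjTranspose_conjTranspose]; exact hU2)
          (U * Dd * Uᴴ * Y + Y * (U * Dd * Uᴴ))
        rwa [Matrix.conjTranspose_conjTranspose] at this

end LemS

section Blocks

variable {ι : Type*} [Fintype ι] [DecidableEq ι] [Nonempty ι]

private lemma sum_normSq_elim (u : ι → ℂ) (v : ι → ℂ) :
    ∑ i : ι ⊕ ι, Complex.normSq (Sum.elim u v i)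
      = ∑ i, Complex.normSq (u i) + ∑ i, Complex.normSq (v i) := by
  rw [Fintype.sum_sum_type]
  simp

private lemma step_a (C D : Matrix ι ι ℂ) (ε : ℂ) (hε : ε = 1 ∨ ε = -1) :
    numRadius (C + ε • D) ≤ 2 * numRadius (Matrix.fromBlocks 0 C (ε • D) 0) := by
  haveI : Nonempty (ι ⊕ ι) := ⟨Sum.inl (Classical.arbitrary ι)⟩
  have hnr0 : 0 ≤ numRadius (Matrix.fromBlocks 0 C (ε • D) 0) := nr_nonneg _
  apply nr_le_of _ (by linarith)
  intro x hx
  have hxs : ∑ i, Complex.normSq ((x : ι → ℂ) i) = 1 := (norm_one_iff x).mp hx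
  set u : ι ⊕ ι → ℂ := Sum.elim (x : ι → ℂ) (ε • (x : ι → ℂ)) with hu
  have hsum : ∑ i, Complex.normSq (u i) = 2 := by
    rw [hu, sum_normSq_elim]
    have : ∀ i, Complex.normSq ((ε • (x : ι → ℂ)) i) = Complex.normSq ((x : ι → ℂ) i) := by
      intro i
      rcases hε with rfl | rfl <;> simp [Complex.normSq_mul]
    rw [Finset.sum_congr rfl fun i _ => this i, hxs]
    norm_num
  have hval := abs_le_nr (Matrix.fromBlocks 0 C (ε • D) 0) u
  rw [hsum] at hval
  have hcompute : dotProduct (star u) ((Matrix.fromBlocks 0 C (ε • D) 0).mulVec u)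
      = ε * dotProduct (star (x : ι → ℂ)) ((C + ε • D).mulVec (x : ι → ℂ)) := by
    rw [hu, Function.star_sumElim, Matrix.fromBlocks_mulVec]
    simp only [Sum.elim_comp_inl, Sum.elim_comp_inr, Matrix.zero_mulVec, add_zero, zero_add]
    rw [sumElim_dotProduct_sumElim]
    rw [Matrix.mulVec_smul, Matrix.smul_mulVec, star_smul,
      smul_dotProduct, dotProduct_smul, Matrix.add_mulVec,
      dotProduct_add, Matrix.smul_mulVec, dotProduct_smul]
    rcases hε with rfl | rfl <;>
      simp only [smul_eq_mul, star_one, star_neg] <;> ring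
  have habs : ‖ε * dotProduct (star (x : ι → ℂ))
        ((C + ε • D).mulVec (x : ι → ℂ))‖
      = ‖dotProduct (star (x : ι → ℂ)) ((C + ε • D).mulVec (x : ι → ℂ))‖ := by
    rcases hε with rfl | rfl <;> simp [neg_mul, one_mul, map_neg_eq_map]
  rw [hcompute, habs] at hval
  linarith

private lemma step_d (E F : Matrix ι ι ℂ) (ε : ℂ) (hε : ε = 1 ∨ ε = -1) :
    numRadius (Matrix.fromBlocks 0 E (ε • F) 0)
      ≤ (numRadius (E + F) + numRadius (E - F)) / 2 := by
  haveI : Nonempty (ι ⊕ ι) := ⟨Sum.inl (Classical.arbitrary ι)⟩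
  have hp : 0 ≤ numRadius (E + F) := nr_nonneg _
  have hq : 0 ≤ numRadius (E - F) := nr_nonneg _
  apply nr_le_of _ (by linarith)
  intro x hx
  set u₁ : ι → ℂ := (x : ι ⊕ ι → ℂ) ∘ Sum.inl with hu₁
  set u₂ : ι → ℂ := (x : ι ⊕ ι → ℂ) ∘ Sum.inr with hu₂
  have hxe : (x : ι ⊕ ι → ℂ) = Sum.elim u₁ u₂ := by
    rw [hu₁, hu₂]
    exact (Sum.elim_comp_inl_inr _).symm
  have hsum : ∑ i, Complex.normSq (u₁ i) + ∑ i, Complex.normSq (u₂ i) = 1 := by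
    have h0 := (norm_one_iff x).mp hx
    rw [show ∑ i, Complex.normSq ((x : ι ⊕ ι → ℂ) i)
      = ∑ i : ι ⊕ ι, Complex.normSq (Sum.elim u₁ u₂ i) from by rw [← hxe]] at h0
    rw [sum_normSq_elim] at h0
    exact h0
  have hval : dotProduct (star (x : ι ⊕ ι → ℂ))
        ((Matrix.fromBlocks 0 E (ε • F) 0).mulVec (x : ι ⊕ ι → ℂ))
      = dotProduct (star u₁) (E.mulVec u₂)
        + ε * dotProduct (star u₂) (F.mulVec u₁) := by
    rw [hxe, Function.star_sumElim, Matrix.fromBlocks_mulVec]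
    simp only [Sum.elim_comp_inl, Sum.elim_comp_inr, Matrix.zero_mulVec, add_zero, zero_add]
    rw [sumElim_dotProduct_sumElim, Matrix.smul_mulVec, dotProduct_smul,
      smul_eq_mul]
  have hPa := pol_add (E + F) u₁ u₂
  have hPs := pol_sub (E + F) u₁ u₂
  have hQa := pol_add (E - F) u₁ u₂
  have hQs := pol_sub (E - F) u₁ u₂
  rw [hsum, mul_one] at hPa hPs hQa hQs
  have h2v : (2 : ℂ) * (dotProduct (star u₁) (E.mulVec u₂)
        + ε * dotProduct (star u₂) (F.mulVec u₁))
      = (dotProduct (star u₁) ((E + F).mulVec u₂)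
          + ε * dotProduct (star u₂) ((E + F).mulVec u₁))
        + (dotProduct (star u₁) ((E - F).mulVec u₂)
          - ε * dotProduct (star u₂) ((E - F).mulVec u₁)) := by
    rw [Matrix.add_mulVec, Matrix.add_mulVec, Matrix.sub_mulVec, Matrix.sub_mulVec,
      dotProduct_add, dotProduct_add, dotProduct_sub,
      dotProduct_sub]
    ring
  have habs2 : (2 : ℝ) * ‖dotProduct (star u₁) (E.mulVec u₂)
        + ε * dotProduct (star u₂) (F.mulVec u₁)‖
      ≤ numRadius (E + F) + numRadius (E - F) := by
    have h3 : ‖(2 : ℂ) * (dotProduct (star u₁) (E.mulVec u₂)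
        + ε * dotProduct (star u₂) (F.mulVec u₁))‖
        = 2 * ‖dotProduct (star u₁) (E.mulVec u₂)
          + ε * dotProduct (star u₂) (F.mulVec u₁)‖ := by
      rw [norm_mul, Complex.norm_two]
    rcases hε with rfl | rfl
    · rw [← h3, h2v]
      calc ‖_‖ ≤ ‖dotProduct (star u₁) ((E + F).mulVec u₂)
            + (1 : ℂ) * dotProduct (star u₂) ((E + F).mulVec u₁)‖
          + ‖dotProduct (star u₁) ((E - F).mulVec u₂)
            - (1 : ℂ) * dotProduct (star u₂) ((E - F).mulVec u₁)‖ :=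
          norm_add_le _ _
        _ ≤ numRadius (E + F) + numRadius (E - F) := by
          rw [one_mul, one_mul]
          exact add_le_add hPa hQs
    · rw [← h3, h2v]
      calc ‖_‖ ≤ ‖dotProduct (star u₁) ((E + F).mulVec u₂)
            + (-1 : ℂ) * dotProduct (star u₂) ((E + F).mulVec u₁)‖
          + ‖dotProduct (star u₁) ((E - F).mulVec u₂)
            - (-1 : ℂ) * dotProduct (star u₂) ((E - F).mulVec u₁)‖ :=
          norm_add_le _ _
        _ ≤ numRadius (E + F) + numRadius (E - F) := by
          have ha1 : dotProduct (star u₁) ((E + F).mulVec u₂)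
              + (-1 : ℂ) * dotProduct (star u₂) ((E + F).mulVec u₁)
              = dotProduct (star u₁) ((E + F).mulVec u₂)
              - dotProduct (star u₂) ((E + F).mulVec u₁) := by ring
          have hb1 : dotProduct (star u₁) ((E - F).mulVec u₂)
              - (-1 : ℂ) * dotProduct (star u₂) ((E - F).mulVec u₁)
              = dotProduct (star u₁) ((E - F).mulVec u₂)
              + dotProduct (star u₂) ((E - F).mulVec u₁) := by ring
          rw [ha1, hb1]
          exact add_le_add hPs hQa
  rw [hval]
  linarith

end Blocks

theorem stmt_1 {n : ℕ} (A B X : Matrix (Fin n) (Fin n) ℂ) (hA : A.PosDef) (hB : B.PosDef)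
    (f g : ℝ → ℝ)
    (hfc : ContinuousOn f (Set.Ioi 0)) (hgc : ContinuousOn g (Set.Ioi 0))
    (hfpos : ∀ t ∈ Set.Ioi (0 : ℝ), 0 < f t) (hgpos : ∀ t ∈ Set.Ioi (0 : ℝ), 0 < g t)
    (hK : IsKwong fun t => f t / g t) (k' : ℝ)
    (hk' : IsGreatest ((fun lam => f lam * g lam / lam) '' (spectrum ℝ A ∪ spectrum ℝ B)) k') :
    numRadius ((cfc f A * X * cfc g B + cfc g A * X * cfc f B) +
        (cfc f B * X * cfc g A + cfc g B * X * cfc f A)) ≤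
      k' * (numRadius ((A + B) * X + X * (A + B)) + numRadius ((A - B) * X - X * (A - B))) ∧
    numRadius ((cfc f A * X * cfc g B + cfc g A * X * cfc f B) -
        (cfc f B * X * cfc g A + cfc g B * X * cfc f A)) ≤
      k' * (numRadius ((A + B) * X + X * (A + B)) + numRadius ((A - B) * X - X * (A - B))) := by
  classical
  rcases Nat.eq_zero_or_pos n with hn | hn
  · exfalso
    subst hn
    haveI : Subsingleton (Matrix (Fin 0) (Fin 0) ℂ) :=
      ⟨fun a b => by apply Matrix.ext; intro i; exact i.elim0⟩
    obtain ⟨lam, hmem, -⟩ := hk'.1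
    rcases hmem with hmem | hmem
    · exact (spectrum.mem_iff.mp hmem) (isUnit_of_subsingleton _)
    · exact (spectrum.mem_iff.mp hmem) (isUnit_of_subsingleton _)
  haveI : Nonempty (Fin n) := ⟨⟨0, hn⟩⟩
  set hAH : A.IsHermitian := hA.1 with hAHdef
  set hBH : B.IsHermitian := hB.1 with hBHdef
  set UA : Matrix (Fin n) (Fin n) ℂ := (hAH.eigenvectorUnitary : Matrix (Fin n) (Fin n) ℂ)
    with hUA
  set UB : Matrix (Fin n) (Fin n) ℂ := (hBH.eigenvectorUnitary : Matrix (Fin n) (Fin n) ℂ)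
    with hUB
  set dA : Fin n → ℝ := hAH.eigenvalues with hdA
  set dB : Fin n → ℝ := hBH.eigenvalues with hdB
  have hdApos : ∀ i, 0 < dA i := fun i => hA.eigenvalues_pos i
  have hdBpos : ∀ i, 0 < dB i := fun i => hB.eigenvalues_pos i
  have hUA1 : UA * UAᴴ = 1 := by
    have := Matrix.mem_unitaryGroup_iff.mp (SetLike.coe_mem hAH.eigenvectorUnitary)
    rwa [Matrix.star_eq_conjTranspose] at this
  have hUA2 : UAᴴ * UA = 1 := by
    have := Matrix.mem_unitaryGroup_iff'.mp (SetLike.coe_mem hAH.eigenvectorUnitary)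
    rwa [Matrix.star_eq_conjTranspose] at this
  have hUB1 : UB * UBᴴ = 1 := by
    have := Matrix.mem_unitaryGroup_iff.mp (SetLike.coe_mem hBH.eigenvectorUnitary)
    rwa [Matrix.star_eq_conjTranspose] at this
  have hUB2 : UBᴴ * UB = 1 := by
    have := Matrix.mem_unitaryGroup_iff'.mp (SetLike.coe_mem hBH.eigenvectorUnitary)
    rwa [Matrix.star_eq_conjTranspose] at this
  have hcfcA : ∀ φ : ℝ → ℝ, cfc φ A = UA * Matrix.diagonal (fun i => (φ (dA i) : ℂ)) * UAᴴ := by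
    intro φ; rw [hAH.cfc_eq]; rfl
  have hcfcB : ∀ φ : ℝ → ℝ, cfc φ B = UB * Matrix.diagonal (fun i => (φ (dB i) : ℂ)) * UBᴴ := by
    intro φ; rw [hBH.cfc_eq]; rfl
  have hspecA : UA * Matrix.diagonal (fun i => (dA i : ℂ)) * UAᴴ = A := by
    conv_rhs => rw [hAH.spectral_theorem]
    rfl
  have hspecB : UB * Matrix.diagonal (fun i => (dB i : ℂ)) * UBᴴ = B := by
    conv_rhs => rw [hBH.spectral_theorem]
    rfl
  -- block data
  set Ub : Matrix (Fin n ⊕ Fin n) (Fin n ⊕ Fin n) ℂ := Matrix.fromBlocks UA 0 0 UB with hUb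
  set db : Fin n ⊕ Fin n → ℝ := Sum.elim dA dB with hdb
  have hUbH : Ubᴴ = Matrix.fromBlocks UAᴴ 0 0 UBᴴ := by
    rw [hUb, Matrix.fromBlocks_conjTranspose]
    simp
  have hUb1 : Ub * Ubᴴ = 1 := by
    rw [hUbH, hUb, Matrix.fromBlocks_multiply]
    simp [hUA1, hUB1, Matrix.fromBlocks_one]
  have hUb2 : Ubᴴ * Ub = 1 := by
    rw [hUbH, hUb, Matrix.fromBlocks_multiply]
    simp [hUA2, hUB2, Matrix.fromBlocks_one]
  have hdbpos : ∀ i, 0 < db i := by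
    intro i
    cases i with
    | inl i => exact hdApos i
    | inr i => exact hdBpos i
  have hfb : ∀ i, 0 < f (db i) := fun i => hfpos _ (hdbpos i)
  have hgb : ∀ i, 0 < g (db i) := fun i => hgpos _ (hdbpos i)
  have hkb : ∀ i, f (db i) * g (db i) / db i ≤ k' := by
    intro i
    apply hk'.2
    refine ⟨db i, ?_, rfl⟩
    cases i with
    | inl i => exact Set.mem_union_left _ (hAH.eigenvalues_mem_spectrum_real i)
    | inr i => exact Set.mem_union_right _ (hBH.eigenvalues_mem_spectrum_real i)
  have hk'0 : 0 ≤ k' := by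
    obtain ⟨lam, hmem, heq⟩ := hk'.1
    have hlampos : 0 < lam := by
      rcases hmem with hmem | hmem
      · rw [hAH.spectrum_real_eq_range_eigenvalues] at hmem
        obtain ⟨i, rfl⟩ := hmem
        exact hdApos i
      · rw [hBH.spectrum_real_eq_range_eigenvalues] at hmem
        obtain ⟨i, rfl⟩ := hmem
        exact hdBpos i
    have h3 : 0 < f lam * g lam / lam :=
      div_pos (mul_pos (hfpos _ hlampos) (hgpos _ hlampos)) hlampos
    rw [← heq]
    exact h3.le
  -- block diagonal and conjugation identities
  have hdiagblock : ∀ φ : ℝ → ℝ,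
      Matrix.diagonal (fun i : Fin n ⊕ Fin n => (φ (db i) : ℂ))
        = Matrix.fromBlocks (Matrix.diagonal fun i => (φ (dA i) : ℂ)) 0 0
            (Matrix.diagonal fun i => (φ (dB i) : ℂ)) := by
    intro φ
    rw [Matrix.fromBlocks_diagonal]
    congr 1
    funext i
    cases i <;> rfl
  have hdiagblock' :
      Matrix.diagonal (fun i : Fin n ⊕ Fin n => (db i : ℂ))
        = Matrix.fromBlocks (Matrix.diagonal fun i => (dA i : ℂ)) 0 0
            (Matrix.diagonal fun i => (dB i : ℂ)) := by
    rw [Matrix.fromBlocks_diagonal]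
    congr 1
    funext i
    cases i <;> rfl
  have hblockmul : ∀ DA DB : Matrix (Fin n) (Fin n) ℂ,
      Ub * Matrix.fromBlocks DA 0 0 DB * Ubᴴ
        = Matrix.fromBlocks (UA * DA * UAᴴ) 0 0 (UB * DB * UBᴴ) := by
    intro DA DB
    rw [hUbH, hUb, Matrix.fromBlocks_multiply, Matrix.fromBlocks_multiply]
    simp
  have hFb : ∀ φ : ℝ → ℝ,
      Ub * Matrix.diagonal (fun i : Fin n ⊕ Fin n => (φ (db i) : ℂ)) * Ubᴴ
        = Matrix.fromBlocks (cfc φ A) 0 0 (cfc φ B) := by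
    intro φ
    rw [hdiagblock φ, hblockmul, ← hcfcA φ, ← hcfcB φ]
  have hTb : Ub * Matrix.diagonal (fun i : Fin n ⊕ Fin n => (db i : ℂ)) * Ubᴴ
      = Matrix.fromBlocks A 0 0 B := by
    rw [hdiagblock', hblockmul, hspecA, hspecB]
  -- main per-sign estimate
  have key : ∀ ε : ℂ, ε = 1 ∨ ε = -1 →
      numRadius ((cfc f A * X * cfc g B + cfc g A * X * cfc f B)
        + ε • (cfc f B * X * cfc g A + cfc g B * X * cfc f A))
      ≤ k' * (numRadius ((A + B) * X + X * (A + B))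
          + numRadius ((A - B) * X - X * (A - B))) := by
    intro ε hε
    set C := cfc f A * X * cfc g B + cfc g A * X * cfc f B with hC
    set D := cfc f B * X * cfc g A + cfc g B * X * cfc f A with hD
    set Yb : Matrix (Fin n ⊕ Fin n) (Fin n ⊕ Fin n) ℂ := Matrix.fromBlocks 0 X (ε • X) 0
      with hYb
    have hblock1 :
        Ub * Matrix.diagonal (fun i : Fin n ⊕ Fin n => (f (db i) : ℂ)) * Ubᴴ * Yb *
          (Ub * Matrix.diagonal (fun i : Fin n ⊕ Fin n => (g (db i) : ℂ)) * Ubᴴ)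
        + Ub * Matrix.diagonal (fun i : Fin n ⊕ Fin n => (g (db i) : ℂ)) * Ubᴴ * Yb *
          (Ub * Matrix.diagonal (fun i : Fin n ⊕ Fin n => (f (db i) : ℂ)) * Ubᴴ)
        = Matrix.fromBlocks 0 C (ε • D) 0 := by
      rw [hFb f, hFb g, hYb, hC, hD]
      simp [Matrix.fromBlocks_multiply, Matrix.fromBlocks_add, mul_smul_comm,
        smul_mul_assoc, smul_add, Matrix.mul_assoc]
    have hblock2 :
        Ub * Matrix.diagonal (fun i : Fin n ⊕ Fin n => (db i : ℂ)) * Ubᴴ * Yb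
          + Yb * (Ub * Matrix.diagonal (fun i : Fin n ⊕ Fin n => (db i : ℂ)) * Ubᴴ)
        = Matrix.fromBlocks 0 (A * X + X * B) (ε • (B * X + X * A)) 0 := by
      rw [hTb, hYb]
      simp [Matrix.fromBlocks_multiply, Matrix.fromBlocks_add, mul_smul_comm,
        smul_mul_assoc, smul_add, Matrix.mul_assoc]
    have hlemS := lemS hUb1 hUb2 db hdbpos f g hfb hgb hK hkb Yb
    rw [hblock1, hblock2] at hlemS
    have hstepa := step_a C D ε hε
    have hstepd := step_d (A * X + X * B) (B * X + X * A) ε hε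
    have hEF1 : (A * X + X * B) + (B * X + X * A) = (A + B) * X + X * (A + B) := by
      noncomm_ring
    have hEF2 : (A * X + X * B) - (B * X + X * A) = (A - B) * X - X * (A - B) := by
      noncomm_ring
    rw [hEF1, hEF2] at hstepd
    calc numRadius (C + ε • D) ≤ 2 * numRadius (Matrix.fromBlocks 0 C (ε • D) 0) := hstepa
      _ ≤ 2 * (k' * numRadius (Matrix.fromBlocks 0 (A * X + X * B) (ε • (B * X + X * A)) 0)) :=
          by linarith
      _ ≤ 2 * (k' * ((numRadius ((A + B) * X + X * (A + B))
            + numRadius ((A - B) * X - X * (A - B))) / 2)) := by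
          have := mul_le_mul_of_nonneg_left hstepd hk'0
          linarith
      _ = k' * (numRadius ((A + B) * X + X * (A + B))
            + numRadius ((A - B) * X - X * (A - B))) := by ring
  constructor
  · have h := key 1 (Or.inl rfl)
    rwa [one_smul] at h
  · have h := key (-1) (Or.inr rfl)
    rwa [neg_one_smul, ← sub_eq_add_neg] at h
end
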